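/- Let P^⊥ and Q^⊥ be the linear cellular automaton shifts determined by Φ and Ψ with S(Φ) ⊆ S(Ψ). Let φ : P^⊥ → Q^⊥ be a topological homomorphism admitting a local rule γ on a finite shape S ⊂ ℤ^d, i.e., γ : (S → 𝔽_p) → 𝔽_p satisfies φ(x)(n) = γ(s ↦ x(n+s)) for all x ∈ P^⊥ and n ∈ ℤ^d. Then for every family of configurations (C_m)_{m ∈ S(Ψ)}, C_m : S → 𝔽_p, such that each C_m occurs in P^⊥ (i.e., there is y ∈ P^⊥ with y(s) = C_m(s) for all s ∈ S), the configuration D := Σ_{m ∈ S(Φ)} Φ(m)·C_m also occurs in P^⊥, and γ(D) = Σ_{m ∈ S(Ψ)} Ψ(m)·γ(C_m). -/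

import Mathlib

open MeasureTheory Filter Topology

namespace LCA

/-- The full shift `𝔽_p^{ℤ^d}`. -/
abbrev Full (p d : ℕ) : Type := (Fin d → ℤ) → ZMod p

/-- The shift action: `(σ_g x)(n) = x(n+g)`. -/
def shift (p d : ℕ) (g : Fin d → ℤ) (x : Full p d) : Full p d := fun n => x (n + g)

/-- `e_d = (0,…,0,1)`, the exponent of the "time" variable `X_d`. -/
def eLast (d : ℕ) : Fin d → ℤ := fun i => if (i : ℕ) = d - 1 then 1 else 0

/-- The linear cellular automaton shift `P^⊥` for `P = X_d − Φ`, as a set: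
all `x` with `x(n+e_d) = Σ_{m ∈ S(Φ)} Φ(m)·x(n+m)` for every `n`. -/
def Pperp (p d : ℕ) (Φ : (Fin d → ℤ) →₀ ZMod p) : Set (Full p d) :=
  {x | ∀ n : Fin d → ℤ, x (n + eLast d) = ∑ m ∈ Φ.support, Φ m * x (n + m)}

/-- `P^⊥` as a closed, shift-invariant subgroup of the full shift. -/
def PperpGroup (p d : ℕ) (Φ : (Fin d → ℤ) →₀ ZMod p) : AddSubgroup (Full p d) where
  carrier := Pperp p d Φ
  zero_mem' := by intro n; simp
  add_mem' := by
    intro x y hx hy n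
    simp only [Pi.add_apply, hx n, hy n, mul_add, Finset.sum_add_distrib]
  neg_mem' := by
    intro x hx n
    simp only [Pi.neg_apply, hx n, mul_neg, Finset.sum_neg_distrib, neg_inj]

lemma shift_mem_Pperp (p d : ℕ) (Φ : (Fin d → ℤ) →₀ ZMod p) (g : Fin d → ℤ)
    {x : Full p d} (hx : x ∈ Pperp p d Φ) : shift p d g x ∈ Pperp p d Φ := by
  intro n
  simpa [shift, add_right_comm] using hx (n + g)

/-- The shift action restricted to `P^⊥`. -/
def shiftSub (p d : ℕ) (Φ : (Fin d → ℤ) →₀ ZMod p) (g : Fin d → ℤ)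
    (x : PperpGroup p d Φ) : PperpGroup p d Φ :=
  ⟨shift p d g x.1, shift_mem_Pperp p d Φ g x.2⟩

end LCA

open LCA

/-!
Put the patterns `C_m` far apart, around the points `N • m` with `N = p ^ j` large. One time
slice of a configuration of `P^⊥` can be prescribed arbitrarily, because `x ↦ Σ Φ(m) x(· + m)` is
onto (by compactness, since the group ring is a domain), and it determines the configuration in
bounded cones above it; so some `x ∈ P^⊥` shows `C_m` around `N • m` for every `m`. In
characteristic `p` we have `(X_d - Φ) ^ N = X_d ^ N - Φ(X ^ N)`, so every configuration of `P^⊥`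
satisfies `x(n + N e_d) = Σ Φ(m) x(n + N m)`. At the points of `S` this exhibits `D` in
`σ_{N e_d} x`, and for `φ x ∈ Q^⊥` at `0` it is the functional equation.
-/

open AddMonoidAlgebra

namespace LCA

theorem exists_int_orbit {α : Type*} {T : α → α} (hT : Function.Surjective T) (a : ℤ) (f : α) :
    ∃ h : ℤ → α, h a = f ∧ ∀ t, h (t + 1) = T (h t) := by
  let back : ℕ → α := fun i => Nat.rec f (fun _ y => Function.surjInv hT y) i
  have hback : ∀ i, T (back (i + 1)) = back i := fun i => Function.surjInv_eq hT (back i)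
  refine ⟨fun t => if a ≤ t then T^[(t - a).toNat] f else back (a - t).toNat, by simp, fun t => ?_⟩
  dsimp only
  rcases lt_trichotomy t (a - 1) with ht | rfl | ht
  · rw [if_neg (by omega), if_neg (by omega), ← hback,
      show (a - t).toNat = (a - (t + 1)).toNat + 1 by omega]
  · simpa [back] using (Function.surjInv_eq hT f).symm
  · rw [if_pos (by omega), if_pos (by omega), show (t + 1 - a).toNat = (t - a).toNat + 1 by omega,
      Function.iterate_succ_apply']

theorem exists_nat_norm_bound {E : Type*} [SeminormedAddGroup E] (S : Finset E) :
    ∃ A : ℕ, ∀ s ∈ S, ‖s‖ ≤ A :=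
  ⟨⌈∑ s ∈ S, ‖s‖⌉₊, fun _ hs =>
    (Finset.single_le_sum (fun s' _ => norm_nonneg s') hs).trans (Nat.le_ceil _)⟩

theorem le_norm_nsmul_of_ne_zero {ι : Type*} [Fintype ι] (N : ℕ) {v : ι → ℤ} (hv : v ≠ 0) :
    (N : ℝ) ≤ ‖N • v‖ := by
  obtain ⟨i, hi⟩ := Function.ne_iff.mp hv
  calc (N : ℝ) ≤ N * |(v i : ℝ)| :=
        le_mul_of_one_le_right N.cast_nonneg (by exact_mod_cast Int.one_le_abs hi)
    _ = ‖(N • v) i‖ := by simp [Int.norm_eq_abs]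
    _ ≤ ‖N • v‖ := norm_le_pi_norm _ i

section Action

variable {k G : Type*} [CommRing k] [AddMonoid G]

def translate : Multiplicative G →* Module.End k (G → k) where
  toFun g := LinearMap.funLeft k k (· + g.toAdd)
  map_one' := by ext; simp
  map_mul' g h := by ext; simp [add_assoc]

noncomputable def act : AddMonoidAlgebra k G →ₐ[k] Module.End k (G → k) :=
  lift k (Module.End k (G → k)) G translate

theorem act_apply (q : AddMonoidAlgebra k G) (x : G → k) (n : G) :
    act q x n = q.coeff.sum fun g a => a * x (n + g) := by
  simp [act, lift_apply, Finsupp.sum, translate, Finset.sum_apply]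

theorem act_single (g : G) (a : k) (x : G → k) (n : G) :
    act (single g a) x n = a * x (n + g) := by
  simp [act, translate]

theorem act_ofCoeff (Φ : G →₀ k) (x : G → k) (n : G) :
    act (ofCoeff Φ) x n = ∑ m ∈ Φ.support, Φ m * x (n + m) :=
  act_apply _ x n

theorem act_single_sub_ofCoeff_eq_zero_iff (e : G) (Φ : G →₀ k) (x : G → k) :
    act (single e 1 - ofCoeff Φ) x = 0 ↔ ∀ n, x (n + e) = ∑ m ∈ Φ.support, Φ m * x (n + m) := by
  simp only [funext_iff, map_sub, LinearMap.sub_apply, act_single, act_ofCoeff,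
    one_mul, sub_eq_zero]

end Action

section Frobenius

variable {p : ℕ} [Fact p.Prime] {G : Type*} [AddCommMonoid G]

theorem single_sub_ofCoeff_pow_char_pow (e : G) (Φ : G →₀ ZMod p) (j : ℕ) :
    (single e 1 - ofCoeff Φ) ^ p ^ j =
      single (p ^ j • e) 1 - ∑ m ∈ Φ.support, single (p ^ j • m) (Φ m) := by
  have := charP_of_injective_algebraMap' (ZMod p) (A := AddMonoidAlgebra (ZMod p) G) p
  rw [sub_pow_char_pow, single_pow, one_pow, ← (sum_coeff_single (ofCoeff Φ)), Finsupp.sum,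
    sum_pow_char_pow]
  simp only [single_pow, ZMod.pow_card_pow]

theorem recurrence_pow_nsmul (e : G) (Φ : G →₀ ZMod p) {x : G → ZMod p}
    (hx : ∀ n, x (n + e) = ∑ m ∈ Φ.support, Φ m * x (n + m)) (j : ℕ) (n : G) :
    x (n + p ^ j • e) = ∑ m ∈ Φ.support, Φ m * x (n + p ^ j • m) := by
  obtain ⟨N, hN⟩ := Nat.exists_eq_succ_of_ne_zero (pow_ne_zero j (Fact.out : p.Prime).ne_zero)
  have hpow : act ((single e 1 - ofCoeff Φ) ^ p ^ j) x = 0 := by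
    rw [hN, pow_succ, map_mul, Module.End.mul_apply,
      (act_single_sub_ofCoeff_eq_zero_iff e Φ x).2 hx, map_zero]
  simpa [single_sub_ofCoeff_pow_char_pow, act_single, sub_eq_zero] using congrFun hpow n

end Frobenius

section Surjectivity

variable {k G : Type*} [Field k] [AddCommGroup G]

theorem eq_zero_of_forall_act_apply_zero {r : AddMonoidAlgebra k G}
    (h : ∀ x : G → k, act r x 0 = 0) : r = 0 := by
  classical
  ext u
  simpa [act_apply, Pi.single_apply, Finsupp.sum] using h (Pi.single u 1)

theorem exists_act_apply_zero_eq_dual (I : Finset G) (ℓ : Module.Dual k (I → k)) :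
    ∃ c : AddMonoidAlgebra k G, ∀ y : G → k, act c y 0 = ℓ fun i => y i := by
  classical
  refine ⟨∑ i : I, single i.1 (ℓ fun j => if i = j then 1 else 0), fun y => ?_⟩
  rw [map_sum, LinearMap.sum_apply, Finset.sum_apply, LinearMap.pi_apply_eq_sum_univ ℓ]
  simp only [act_single, zero_add, smul_eq_mul, mul_comm]

variable [UniqueSums G]

theorem surjective_restrict_act {q : AddMonoidAlgebra k G} (hq : q ≠ 0) (I : Finset G) :
    Function.Surjective fun (x : G → k) (i : I) => act q x i := by
  classical
  let L : (G → k) →ₗ[k] I → k := LinearMap.pi fun i => LinearMap.proj i.1 ∘ₗ act q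
  refine (LinearMap.dualMap_injective_iff (f := L)).mp
    ((injective_iff_map_eq_zero L.dualMap).mpr fun ℓ hℓ => ?_)
  obtain ⟨c, hc⟩ := exists_act_apply_zero_eq_dual I ℓ
  have hcq : c * q = 0 := eq_zero_of_forall_act_apply_zero fun x => by
    rw [map_mul, Module.End.mul_apply, hc]
    exact LinearMap.congr_fun hℓ x
  have hc0 : c = 0 := (mul_eq_zero.mp hcq).resolve_right hq
  refine LinearMap.ext fun v => ?_
  have := hc fun g => if h : g ∈ I then v ⟨g, h⟩ else 0
  simpa [hc0] using this.symm

theorem surjective_act [Finite k] {q : AddMonoidAlgebra k G} (hq : q ≠ 0) :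
    Function.Surjective (act q) := by
  let _ : TopologicalSpace k := ⊥
  have _ : DiscreteTopology k := ⟨rfl⟩
  have hcont : Continuous (act q) := by
    refine continuous_pi fun n => ?_
    simp only [act_apply, Finsupp.sum]
    fun_prop
  have hclosed : IsClosed (Set.range (act q)) := (isCompact_range hcont).isClosed
  intro g
  by_contra hg
  obtain ⟨I, u, hu, hIu⟩ := isOpen_pi_iff.mp hclosed.isOpen_compl g hg
  obtain ⟨x, hx⟩ := surjective_restrict_act hq I fun i => g i
  refine hIu (fun i hi => ?_) ⟨x, rfl⟩
  simpa [← congrFun hx ⟨i, hi⟩] using (hu i hi).2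

end Surjectivity

section Slices

variable {p d : ℕ} {Φ : (Fin d → ℤ) →₀ ZMod p} {i0 : Fin d}

theorem eLast_eq_single (hi0 : (i0 : ℕ) = d - 1) : eLast d = Pi.single i0 1 := by
  ext i
  simp only [eLast, Pi.single_apply, ← Fin.val_inj, hi0]

theorem exists_mem_Pperp_eq_on_slice [Fact p.Prime] (hi0 : (i0 : ℕ) = d - 1) (hΦ : Φ ≠ 0)
    (hΦsupp : ∀ m ∈ Φ.support, m i0 = 0) (f : Full p d) (a : ℤ) :
    ∃ x ∈ Pperp p d Φ, ∀ n, n i0 = a → x n = f n := by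
  obtain ⟨h, rfl, hh⟩ := exists_int_orbit (surjective_act (mt ofCoeff_eq_zero.mp hΦ)) a f
  refine ⟨fun n => h (n i0) (n + (a - n i0) • eLast d), fun n => ?_, fun n hn => by simp [hn]⟩
  simp only [eLast_eq_single hi0, Pi.add_apply, Pi.single_eq_same, hh, act_ofCoeff]
  refine Finset.sum_congr rfl fun m hm => ?_
  rw [hΦsupp m hm, add_zero]
  congr 2
  module

theorem apply_add_nsmul_eLast_eq_of_eq_on_slice {M : ℝ} (hΦsupp : ∀ m ∈ Φ.support, m i0 = 0)
    (hM : ∀ m ∈ Φ.support, ‖m‖ ≤ M) {x y : Full p d} (hx : x ∈ Pperp p d Φ)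
    (hy : y ∈ Pperp p d Φ) (t : ℕ) (c : Fin d → ℤ)
    (h : ∀ n, n i0 = c i0 → ‖n - c‖ ≤ t * M → x n = y n) :
    x (c + t • eLast d) = y (c + t • eLast d) := by
  induction t generalizing c with
  | zero => simpa using h c rfl (by simp)
  | succ t ih =>
    rw [succ_nsmul, ← add_assoc, hx, hy]
    refine Finset.sum_congr rfl fun m hm => ?_
    rw [add_right_comm, ih (c + m) fun n hn hnorm => h n (by simpa [hΦsupp m hm] using hn) ?_]
    calc ‖n - c‖ = ‖(n - (c + m)) + m‖ := by rw [sub_add_eq_sub_sub, sub_add_cancel]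
      _ ≤ ‖n - (c + m)‖ + ‖m‖ := norm_add_le _ _
      _ ≤ t * M + M := add_le_add hnorm (hM m hm)
      _ = (t + 1 : ℕ) * M := by push_cast; ring

theorem exists_mem_Pperp_eq_on_patches [Fact p.Prime] (hi0 : (i0 : ℕ) = d - 1) (hΦ : Φ ≠ 0)
    (hΦsupp : ∀ m ∈ Φ.support, m i0 = 0) {M : ℕ} (hM : ∀ m ∈ Φ.support, ‖m‖ ≤ M) (A : ℕ)
    {ι : Type*} (F : Finset ι) (c : ι → Fin d → ℤ) (hc : ∀ i ∈ F, c i i0 = 0)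
    (hsep : ∀ i ∈ F, ∀ j ∈ F, i ≠ j → 2 * (3 * A + 2 * A * M : ℝ) < ‖c i - c j‖)
    (w : ι → Full p d) (hw : ∀ i ∈ F, w i ∈ Pperp p d Φ) :
    ∃ x ∈ Pperp p d Φ, ∀ i ∈ F, ∀ v, ‖v‖ ≤ A → x (c i + v) = w i v := by
  classical
  -- A point within `A` of a centre lies at most `2 * A` above the slice at height `-A`, so it
  -- depends only on slice values within `2 * A * M` of a base point `3 * A`-close to the centre.
  set r : ℝ := 3 * A + 2 * A * M
  let f : Full p d := fun n => ∑ i ∈ F, if ‖n - c i‖ ≤ r then w i (n - c i) else 0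
  have hf : ∀ i ∈ F, ∀ n, ‖n - c i‖ ≤ r → f n = w i (n - c i) := by
    intro i hi n hn
    refine (Finset.sum_eq_single_of_mem i hi fun j hj hji => if_neg fun hnj => ?_).trans (if_pos hn)
    have := norm_sub_le_norm_sub_add_norm_sub (c j) n (c i)
    rw [norm_sub_rev (c j) n] at this
    linarith [hsep j hj i hi hji]
  obtain ⟨x, hx, hxf⟩ := exists_mem_Pperp_eq_on_slice hi0 hΦ hΦsupp f (-A)
  refine ⟨x, hx, fun i hi v hv => ?_⟩
  obtain ⟨hvi0, hvi0'⟩ : -(A : ℤ) ≤ v i0 ∧ v i0 ≤ A := by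
    have := (norm_le_pi_norm v i0).trans hv
    rw [Int.norm_eq_abs] at this
    exact abs_le.mp (by exact_mod_cast this)
  set t := (v i0 + A).toNat
  have ht : (t : ℤ) = v i0 + A := by omega
  have ht2 : (t : ℝ) ≤ 2 * A := by exact_mod_cast (by omega : (t : ℤ) ≤ 2 * A)
  have hy := shift_mem_Pperp p d Φ (-c i) (hw i hi)
  rw [← sub_add_cancel (c i + v) (t • eLast d),
    apply_add_nsmul_eLast_eq_of_eq_on_slice hΦsupp hM hx hy t _ fun n hn hnorm => ?_]
  · simp [shift]
  have hn' : n i0 = -A := by simp [hn, eLast_eq_single hi0, hc i hi, ht]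
  have hnc : ‖n - c i‖ ≤ r := calc
    ‖n - c i‖ = ‖(n - (c i + v - t • eLast d)) + (v - t • eLast d)‖ := by congr 1; abel
    _ ≤ ‖n - (c i + v - t • eLast d)‖ + (‖v‖ + t * ‖eLast d‖) :=
      norm_add_le_of_le le_rfl ((norm_sub_le _ _).trans (add_le_add_right norm_nsmul_le _))
    _ ≤ t * M + (A + t) := by
      gcongr
      rw [eLast_eq_single hi0, Pi.norm_single, norm_one, mul_one]
    _ ≤ r := by nlinarith
  rw [hxf n hn', hf i hi n hnc]
  simp [shift, sub_eq_add_neg]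

theorem exists_mem_Pperp_eq_on_scaled_patches [Fact p.Prime] (hi0 : (i0 : ℕ) = d - 1)
    (hΦ : Φ ≠ 0) (hΦsupp : ∀ m ∈ Φ.support, m i0 = 0) (A : ℕ) (F : Finset (Fin d → ℤ))
    (hF : ∀ m ∈ F, m i0 = 0) (w : (Fin d → ℤ) → Full p d) (hw : ∀ m ∈ F, w m ∈ Pperp p d Φ) :
    ∃ j : ℕ, ∃ x ∈ Pperp p d Φ, ∀ m ∈ F, ∀ v, ‖v‖ ≤ A → x (p ^ j • m + v) = w m v := by
  obtain ⟨M, hM⟩ := exists_nat_norm_bound Φ.support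
  obtain ⟨j, hj⟩ := pow_unbounded_of_one_lt (2 * (3 * A + 2 * A * M : ℝ))
    (Nat.one_lt_cast.mpr (Fact.out : p.Prime).one_lt)
  have hsep : ∀ m ∈ F, ∀ m' ∈ F, m ≠ m' →
      2 * (3 * A + 2 * A * M : ℝ) < ‖p ^ j • m - p ^ j • m'‖ := fun m _ m' _ hmm' => by
    rw [← smul_sub]
    exact hj.trans_le (by exact_mod_cast le_norm_nsmul_of_ne_zero (p ^ j) (sub_ne_zero.mpr hmm'))
  exact ⟨j, exists_mem_Pperp_eq_on_patches hi0 hΦ hΦsupp hM A F (p ^ j • ·)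
    (fun m hm => by simp [hF m hm]) hsep w hw⟩

end Slices

end LCA

open LCA

/-- Suppose `S(Φ) ⊆ S(Ψ)` and `φ : P^⊥ → Q^⊥` is a topological
homomorphism admitting a local rule `γ` on a finite shape `S`, i.e.
`φ(x)(n) = γ(s ↦ x(n+s))`.  Then for every family of configurations `(C_m)_{m ∈ S(Ψ)}`
on `S`, each occurring in `P^⊥`, the configuration `D = Σ_{m ∈ S(Φ)} Φ(m)·C_m` also
occurs in `P^⊥`, and `γ(D) = Σ_{m ∈ S(Ψ)} Ψ(m)·γ(C_m)`. -/
theorem local_rule_functional_equation (p d : ℕ) [Fact p.Prime] (hd : 2 ≤ d)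
    (Φ Ψ : (Fin d → ℤ) →₀ ZMod p)
    (hΦsupp : ∀ m ∈ Φ.support, m ⟨d - 1, by omega⟩ = 0)
    (hΨsupp : ∀ m ∈ Ψ.support, m ⟨d - 1, by omega⟩ = 0)
    (hΦ2 : 2 ≤ Φ.support.card)
    (hsub : Φ.support ⊆ Ψ.support)
    (φ : PperpGroup p d Φ → PperpGroup p d Ψ)
    (S : Finset (Fin d → ℤ))
    (γ : ({s // s ∈ S} → ZMod p) → ZMod p)
    (hγ : ∀ (x : PperpGroup p d Φ) (n : Fin d → ℤ),
      (φ x : Full p d) n = γ (fun s => (x : Full p d) (n + s.1)))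
    (C : (Fin d → ℤ) → ({s // s ∈ S} → ZMod p))
    (hC : ∀ m ∈ Ψ.support, ∃ y ∈ Pperp p d Φ, ∀ s : {s // s ∈ S}, y s.1 = C m s) :
    (∃ y ∈ Pperp p d Φ, ∀ s : {s // s ∈ S},
        y s.1 = ∑ m ∈ Φ.support, Φ m * C m s) ∧
    γ (fun s => ∑ m ∈ Φ.support, Φ m * C m s) = ∑ m ∈ Ψ.support, Ψ m * γ (C m) := by
  have hΦ : Φ ≠ 0 := by rintro rfl; simp at hΦ2
  choose! z hz hzC using hC
  obtain ⟨A, hA⟩ := exists_nat_norm_bound S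
  obtain ⟨j, x, hx, hxz⟩ :=
    exists_mem_Pperp_eq_on_scaled_patches rfl hΦ hΦsupp A Ψ.support hΨsupp z hz
  have hxC : ∀ m ∈ Ψ.support, ∀ s : {s // s ∈ S}, x (p ^ j • m + s) = C m s := fun m hm s =>
    (hxz m hm s (hA s s.2)).trans (hzC m hm s)
  have hD : ∀ s : {s // s ∈ S}, x (s + p ^ j • eLast d) = ∑ m ∈ Φ.support, Φ m * C m s := by
    intro s
    rw [recurrence_pow_nsmul _ _ hx]
    exact Finset.sum_congr rfl fun m hm => by rw [add_comm, hxC m (hsub hm)]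
  refine ⟨⟨shift p d (p ^ j • eLast d) x, shift_mem_Pperp p d Φ _ hx, hD⟩, ?_⟩
  have hφ := recurrence_pow_nsmul _ _ (φ ⟨x, hx⟩).2 j 0
  simp only [zero_add, hγ] at hφ
  calc γ (fun s => ∑ m ∈ Φ.support, Φ m * C m s)
      = γ (fun s => x (p ^ j • eLast d + s)) := congrArg γ (funext fun s => by rw [add_comm, hD])
    _ = ∑ m ∈ Ψ.support, Ψ m * γ (fun s => x (p ^ j • m + s)) := hφ
    _ = ∑ m ∈ Ψ.support, Ψ m * γ (C m) :=
      Finset.sum_congr rfl fun m hm => by rw [funext (hxC m hm)]
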